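/- Let g = g₁ + g₂ with g₁, g₂ ≥ 1, let τ₁ ∈ H_{g₁}, τ₂ ∈ H_{g₂}, and let τ = diag(τ₁, τ₂) ∈ H_g. Then for every odd characteristic m ∈ F_2^g × F_2^g and all indices 1 ≤ i ≤ g₁ < j ≤ g, the gradient satisfies (v_m(τ))_i · (v_m(τ))_j = 0. Hence the Gauss images of all smooth two-torsion points on the theta divisor of the decomposable abelian variety X_τ lie on each of the g₁·g₂ reducible quadrics X_i X_j = 0 in P^{g−1}; in particular they lie on the union of the two coordinate linear subspaces ℂ^{g₁} ∪ ℂ^{g₂} ⊂ ℂ^g. -/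

import Mathlib

open scoped BigOperators
open Matrix

noncomputable section

/-- The theta function with characteristic `[ε, δ]`. -/
def theta {ι : Type} [Fintype ι] (ε δ : ι → ZMod 2) (τ : ι → ι → ℂ) (z : ι → ℂ) : ℂ :=
  ∑' p : ι → ℤ,
    Complex.exp ((Real.pi : ℂ) * Complex.I *
      ((∑ i, ∑ j, ((p i : ℂ) + ((ε i).val : ℂ) / 2) * τ i j * ((p j : ℂ) + ((ε j).val : ℂ) / 2)) +
        2 * ∑ i, ((p i : ℂ) + ((ε i).val : ℂ) / 2) * (z i + ((δ i).val : ℂ) / 2)))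

/-- The Siegel upper half-space: symmetric complex matrices with positive definite
imaginary part. -/
def SiegelUpper (ι : Type) [Fintype ι] : Set (ι → ι → ℂ) :=
  {τ | (∀ i j, τ i j = τ j i) ∧ (Matrix.of fun i j => (τ i j).im).PosDef}

/-- The gradient `v_m(τ) = grad_z θ_m(τ,z)|_{z=0}`. -/
def vGrad {ι : Type} [Fintype ι] [DecidableEq ι] (ε δ : ι → ZMod 2) (τ : ι → ι → ℂ) :
    ι → ℂ :=
  fun i => fderiv ℂ (theta ε δ τ) 0 (Pi.single i 1)

/-- The second order theta function `Θ[σ](τ,z) = θ_{[σ,0]}(2τ,2z)`. -/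
def theta2 {ι : Type} [Fintype ι] (σ : ι → ZMod 2) (τ : ι → ι → ℂ) (z : ι → ℂ) : ℂ :=
  theta σ 0 (fun i j => 2 * τ i j) (fun i => 2 * z i)

/-- The second order theta constant `Θ[σ](τ)`. -/
def Theta2c {ι : Type} [Fintype ι] (σ : ι → ZMod 2) (τ : ι → ι → ℂ) : ℂ := theta2 σ τ 0

/-- `∂_{z_i}∂_{z_j} Θ[σ](τ, z)|_{z = 0}`. -/
def dz2Theta2 {ι : Type} [Fintype ι] [DecidableEq ι] (σ : ι → ZMod 2) (τ : ι → ι → ℂ)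
    (i j : ι) : ℂ :=
  fderiv ℂ (fun z => fderiv ℂ (theta2 σ τ) z (Pi.single i 1)) 0 (Pi.single j 1)

/-- The matrix `A_{εδ}(τ)`. -/
def Amat {ι : Type} [Fintype ι] [DecidableEq ι] (ε δ : ι → ZMod 2) (τ : ι → ι → ℂ) :
    Matrix ι ι ℂ :=
  Matrix.of fun i j => dz2Theta2 δ τ i j * Theta2c ε τ - dz2Theta2 ε τ i j * Theta2c δ τ

/-- The matrix `C_{εδ}(τ)`. -/
def Cmat {ι : Type} [Fintype ι] [DecidableEq ι] (ε δ : ι → ZMod 2) (τ : ι → ι → ℂ) :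
    Matrix ι ι ℂ :=
  Matrix.of fun i j => 2 * vGrad ε δ τ i * vGrad ε δ τ j

/-- An integer matrix viewed as a complex matrix. -/
def intMatC {g : ℕ} (M : Matrix (Fin g) (Fin g) ℤ) : Matrix (Fin g) (Fin g) ℂ :=
  M.map fun n => (n : ℂ)

/-- The automorphy factor `Cτ + D`. -/
def cocycle {g : ℕ} (C D : Matrix (Fin g) (Fin g) ℤ) (τ : Fin g → Fin g → ℂ) :
    Matrix (Fin g) (Fin g) ℂ :=
  intMatC C * Matrix.of τ + intMatC D

/-- The action `γ·τ = (Aτ+B)(Cτ+D)⁻¹` of a symplectic matrix with blocks `A B C D`. -/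
def modAction {g : ℕ} (A B C D : Matrix (Fin g) (Fin g) ℤ) (τ : Fin g → Fin g → ℂ) :
    Fin g → Fin g → ℂ :=
  fun i j => ((intMatC A * Matrix.of τ + intMatC B) * (cocycle C D τ)⁻¹) i j

/-- `[[A,B],[C,D]] ∈ Sp(2g,ℤ)`. -/
def IsSymplectic {g : ℕ} (A B C D : Matrix (Fin g) (Fin g) ℤ) : Prop :=
  Aᵀ * C = Cᵀ * A ∧ Bᵀ * D = Dᵀ * B ∧ Aᵀ * D - Cᵀ * B = 1

/-- `[[A,B],[C,D]] ∈ Γ_g(2,4)`. -/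
def InGamma24 {g : ℕ} (A B C D : Matrix (Fin g) (Fin g) ℤ) : Prop :=
  IsSymplectic A B C D ∧
    A.map (fun n : ℤ => (n : ZMod 2)) = 1 ∧ B.map (fun n : ℤ => (n : ZMod 2)) = 0 ∧
    C.map (fun n : ℤ => (n : ZMod 2)) = 0 ∧ D.map (fun n : ℤ => (n : ZMod 2)) = 1 ∧
    (∀ i, (4 : ℤ) ∣ (Aᵀ * B) i i) ∧ (∀ i, (4 : ℤ) ∣ (Cᵀ * D) i i)

/-- `[[A,B],[C,D]] ∈ Γ*_g(2,4)`. -/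
def InGamma24Star {g : ℕ} (A B C D : Matrix (Fin g) (Fin g) ℤ) : Prop :=
  InGamma24 A B C D ∧ (4 : ℤ) ∣ (A - 1).trace

/-- The coordinate derivative `∂/∂τ_{ij}` (with `τ_{ij} = τ_{ji}`, `i ≤ j`, as independent
coordinates) of a function of `τ`. -/
def dTauRaw {g : ℕ} (i j : Fin g) (F : (Fin g → Fin g → ℂ) → ℂ) (τ : Fin g → Fin g → ℂ) : ℂ :=
  fderiv ℂ F τ (fun a b => if (a = i ∧ b = j) ∨ (a = j ∧ b = i) then 1 else 0)

/-- The operator `∂_{ij} = ((1+δ_{ij})/2) ∂/∂τ_{ij}`. -/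
def dTau {g : ℕ} (i j : Fin g) (F : (Fin g → Fin g → ℂ) → ℂ) : (Fin g → Fin g → ℂ) → ℂ :=
  fun τ => ((1 + if i = j then 1 else 0) / 2 : ℂ) * dTauRaw i j F τ

/-- The operator minor `|∂^I_J|`: the determinant of the submatrix of `∂ = (∂_{ij})` with rows
`I` and columns `J`, expanded as a signed sum of compositions of the operators `∂_{ij}`. -/
def opMinor {g : ℕ} (I J : Finset (Fin g)) (F : (Fin g → Fin g → ℂ) → ℂ) :
    (Fin g → Fin g → ℂ) → ℂ :=
  if h : J.card = I.card then
    ∑ σ : Equiv.Perm (Fin I.card),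
      ((Equiv.Perm.sign σ : ℤ) : ℂ) •
        (List.finRange I.card).foldr
          (fun t G => dTau (I.orderIsoOfFin rfl t).1 (J.orderIsoOfFin h (σ t)).1 G) F
  else 0

/-- The enumeration of `α` listing first the elements of `I` in increasing order, then the
elements of the complement of `I` in increasing order. -/
def concatEnum {α : Type} [Fintype α] [LinearOrder α] (I : Finset α) :
    Fin (Fintype.card α) ≃ α :=
  ((finCongr (Nat.add_sub_cancel' I.card_le_univ)).symm).trans <|
    finSumFinEquiv.symm.trans <|
      (Equiv.sumCongr (I.orderIsoOfFin rfl).toEquiv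
        ((Iᶜ.orderIsoOfFin (Finset.card_compl I)).toEquiv.trans
          (Equiv.subtypeEquivRight (q := fun x => x ∈ (I : Set α)ᶜ) (fun x => by simp)))).trans <|
        Equiv.Set.sumCompl (I : Set α)

/-- The permutation of `α` turning the concatenation of `I` and `Iᶜ` (each increasingly
ordered) into increasing order. -/
def concatPerm {α : Type} [Fintype α] [LinearOrder α] (I : Finset α) : Equiv.Perm α :=
  (concatEnum I).symm.trans (monoEquivOfFin α rfl).toEquiv

/-- The sign `s(I)` of the permutation `concatPerm I`. -/
def sSign {α : Type} [Fintype α] [LinearOrder α] (I : Finset α) : ℤˣ :=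
  Equiv.Perm.sign (concatPerm I)

/-- The sign `s(I)` of a subset `I` of an ambient finite set `S`. -/
def sSignIn {α : Type} [Fintype α] [LinearOrder α] [DecidableEq α] (S I : Finset α) : ℤˣ :=
  sSign (α := {x // x ∈ S}) (I.subtype (· ∈ S))

/-- Freitag's pairing matrix `B(τ)` associated to two scalar functions `f, h` of `τ`. -/
def freitagB {g : ℕ} (f h : (Fin g → Fin g → ℂ) → ℂ) (τ : Fin g → Fin g → ℂ) :
    Matrix (Fin g) (Fin g) ℂ :=
  Matrix.of fun i j => (-1 : ℂ) ^ ((i : ℕ) + (j : ℕ)) *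
    ∑ k ∈ Finset.range g, ((-1 : ℂ) ^ k / ((g - 1).choose k : ℂ)) *
      ∑ I ∈ (Finset.univ.erase i).powersetCard k,
        ∑ J ∈ (Finset.univ.erase j).powersetCard k,
          ((sSignIn (Finset.univ.erase i) I : ℤ) : ℂ) *
            ((sSignIn (Finset.univ.erase j) J : ℤ) : ℂ) *
            opMinor I J f τ *
            opMinor ((Finset.univ.erase i) \ I) ((Finset.univ.erase j) \ J) h τ

/-- The generalized cross product of `g-1` vectors in `ℂ^g`. -/
def crossVec {m g : ℕ} (v : Fin m → Fin g → ℂ) : Fin g → ℂ :=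
  if h : g = m + 1 then
    fun k => (-1 : ℂ) ^ (k : ℕ) *
      Matrix.det (Matrix.of fun a b : Fin m => v b (Fin.cast h.symm ((Fin.cast h k).succAbove a)))
  else 0

/-- The matrix `W(m₁, …, m_{g-1})(τ) = π^{-2g+2} Fᵗ F` built from the cross product `F` of a
family of vectors. -/
def Wmat {m g : ℕ} (v : Fin m → Fin g → ℂ) : Matrix (Fin g) (Fin g) ℂ :=
  Matrix.of fun i j => (Real.pi : ℂ) ^ (2 - 2 * (g : ℤ)) * crossVec v i * crossVec v j

/-- The block diagonal matrix `diag(τ₁, τ₂)`. -/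
def blockDiag {ι κ : Type} (τ₁ : ι → ι → ℂ) (τ₂ : κ → κ → ℂ) : ι ⊕ κ → ι ⊕ κ → ℂ :=
  fun a b =>
    match a, b with
    | .inl i, .inl j => τ₁ i j
    | .inr i, .inr j => τ₂ i j
    | _, _ => 0

/-! The reflection `z = (z₁, z₂) ↦ (-z₁, z₂)` is realised on the summation lattice of `θ_m` by
the involution `p₁ ↦ -p₁ - ε₁`, and for block diagonal `τ` it preserves the quadratic form of
the exponent. Comparing the linear terms gives `θ_m(-z₁, z₂) = (-1)^(ε₁·δ₁) θ_m(z₁, z₂)`. If this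
sign is `+1`, the gradient at `0` has no `z₁`-components; if it is `-1`, it has no
`z₂`-components. -/

section Parity

variable {𝕜 E F : Type*} [NontriviallyNormedField 𝕜] [NormedAddCommGroup E] [NormedSpace 𝕜 E]
  [NormedAddCommGroup F] [NormedSpace 𝕜 F]

theorem fderiv_zero_apply_of_comp_eq_smul {f : E → F} (L : E →L[𝕜] E) (c : 𝕜)
    (hf : ∀ z, f (L z) = c • f z) (w : E) :
    fderiv 𝕜 f 0 (L w) = c • fderiv 𝕜 f 0 w := by
  by_cases hd : DifferentiableAt 𝕜 f 0
  · have hcomp : fderiv 𝕜 (f ∘ L) 0 = fderiv 𝕜 (c • f) 0 := by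
      rw [show f ∘ L = c • f from funext hf]
    rw [fderiv_comp 0 (by rwa [map_zero]) L.differentiableAt, map_zero, L.fderiv,
      fderiv_const_smul hd] at hcomp
    exact congrArg (· w) hcomp
  · simp [fderiv_zero_of_not_differentiableAt hd]

theorem fderiv_zero_mul_eq_zero_of_comp_eq_neg_one_pow [CharZero 𝕜] {f : E → 𝕜}
    (L : E →L[𝕜] E) (n : ℕ) (hf : ∀ z, f (L z) = (-1) ^ n * f z) {v w : E}
    (hv : L v = -v) (hw : L w = w) :
    fderiv 𝕜 f 0 v * fderiv 𝕜 f 0 w = 0 := by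
  have hv' := fderiv_zero_apply_of_comp_eq_smul L _ hf v
  have hw' := fderiv_zero_apply_of_comp_eq_smul L _ hf w
  rw [hv, map_neg, smul_eq_mul] at hv'
  rw [hw, smul_eq_mul] at hw'
  rcases n.even_or_odd with he | ho
  · rw [he.neg_one_pow, one_mul] at hv'
    have : fderiv 𝕜 f 0 v = 0 := by linear_combination (-1 / 2 : 𝕜) * hv'
    rw [this, zero_mul]
  · rw [ho.neg_one_pow] at hw'
    have : fderiv 𝕜 f 0 w = 0 := by linear_combination (1 / 2 : 𝕜) * hw'
    rw [this, mul_zero]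

end Parity

theorem Complex.exp_neg_two_pi_I_mul_int_add_half (k : ℤ) (n : ℕ) :
    Complex.exp (-(2 * Real.pi * Complex.I) * (k + n / 2)) = (-1) ^ n := by
  rw [show -(2 * Real.pi * Complex.I) * (k + n / 2)
      = ((-k : ℤ) : ℂ) * (2 * Real.pi * Complex.I) + n * -(Real.pi * Complex.I) by push_cast; ring,
    Complex.exp_add, Complex.exp_int_mul_two_pi_mul_I, Complex.exp_nat_mul, Complex.exp_neg,
    Complex.exp_pi_mul_I, one_mul, inv_neg, inv_one]

namespace ThetaBlockDiag

variable {ι κ : Type}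

def flipSign : ι ⊕ κ → ℂ := Sum.elim (fun _ => -1) (fun _ => 1)

def flipLatticeFun (ε : ι ⊕ κ → ZMod 2) (p : ι ⊕ κ → ℤ) : ι ⊕ κ → ℤ :=
  Sum.elim (fun i => -p (.inl i) - (ε (.inl i)).val) (fun j => p (.inr j))

def flipLattice (ε : ι ⊕ κ → ZMod 2) : Equiv.Perm (ι ⊕ κ → ℤ) :=
  Function.Involutive.toPerm (flipLatticeFun ε) fun p => by
    funext a; cases a <;> simp [flipLatticeFun]

theorem flipLattice_add_half (ε : ι ⊕ κ → ZMod 2) (p : ι ⊕ κ → ℤ) (a : ι ⊕ κ) :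
    ((flipLattice ε p a : ℤ) : ℂ) + ((ε a).val : ℂ) / 2
      = flipSign a * ((p a : ℂ) + ((ε a).val : ℂ) / 2) := by
  rw [show flipLattice ε p = flipLatticeFun ε p from rfl]
  cases a <;> simp only [flipLatticeFun, flipSign, Sum.elim_inl, Sum.elim_inr] <;> push_cast <;> ring

variable [Fintype ι] [Fintype κ]

theorem quadForm_flipSign {τ : ι ⊕ κ → ι ⊕ κ → ℂ} (h₁₂ : ∀ i j, τ (.inl i) (.inr j) = 0)
    (h₂₁ : ∀ j i, τ (.inr j) (.inl i) = 0) (x : ι ⊕ κ → ℂ) :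
    ∑ a, ∑ b, flipSign a * x a * τ a b * (flipSign b * x b) = ∑ a, ∑ b, x a * τ a b * x b := by
  refine Finset.sum_congr rfl fun a _ => Finset.sum_congr rfl fun b _ => ?_
  have hsign : flipSign a * flipSign b * τ a b = τ a b := by
    cases a <;> cases b <;> simp [flipSign, h₁₂, h₂₁]
  linear_combination x a * x b * hsign

theorem linForm_flipSign (x z d : ι ⊕ κ → ℂ) :
    ∑ a, flipSign a * x a * (flipSign a * z a + d a)
      = ∑ a, x a * (z a + d a) - 2 * ∑ i, x (.inl i) * d (.inl i) := by
  have hinl : ∀ i, -1 * x (.inl i) * (-1 * z (.inl i) + d (.inl i))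
      = x (.inl i) * (z (.inl i) + d (.inl i)) - 2 * (x (.inl i) * d (.inl i)) := fun i => by ring
  simp only [Fintype.sum_sum_type, flipSign, Sum.elim_inl, Sum.elim_inr, hinl, one_mul,
    Finset.sum_sub_distrib, Finset.mul_sum]
  ring

theorem theta_flipSign_mul {τ : ι ⊕ κ → ι ⊕ κ → ℂ} (h₁₂ : ∀ i j, τ (.inl i) (.inr j) = 0)
    (h₂₁ : ∀ j i, τ (.inr j) (.inl i) = 0) (ε δ : ι ⊕ κ → ZMod 2) (z : ι ⊕ κ → ℂ) :
    theta ε δ τ (fun a => flipSign a * z a)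
      = (-1) ^ (∑ i, (ε (.inl i)).val * (δ (.inl i)).val) * theta ε δ τ z := by
  unfold theta
  rw [← tsum_mul_left, ← (flipLattice ε).tsum_eq]
  refine tsum_congr fun p => ?_
  simp only [flipLattice_add_half, quadForm_flipSign h₁₂ h₂₁, linForm_flipSign]
  set x : ι ⊕ κ → ℂ := fun a => (p a : ℂ) + ((ε a).val : ℂ) / 2
  have hK : 2 * ∑ i, x (.inl i) * (((δ (.inl i)).val : ℂ) / 2)
      = ((∑ i, p (.inl i) * (δ (.inl i)).val : ℤ) : ℂ)
        + ((∑ i, (ε (.inl i)).val * (δ (.inl i)).val : ℕ) : ℂ) / 2 := by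
    simp only [x]; push_cast
    rw [Finset.mul_sum, Finset.sum_div, ← Finset.sum_add_distrib]
    exact Finset.sum_congr rfl fun i _ => by ring
  rw [show ∀ Q L K : ℂ, Real.pi * Complex.I * (Q + 2 * (L - 2 * K))
      = Real.pi * Complex.I * (Q + 2 * L) + -(2 * Real.pi * Complex.I) * (2 * K) by
        intros; ring,
    Complex.exp_add, hK, Complex.exp_neg_two_pi_I_mul_int_add_half, mul_comm]

end ThetaBlockDiag

theorem statement19_general {g₁ g₂ : ℕ}
    (τ₁ : Fin g₁ → Fin g₁ → ℂ)
    (τ₂ : Fin g₂ → Fin g₂ → ℂ)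
    (ε δ : Fin g₁ ⊕ Fin g₂ → ZMod 2)
    (i : Fin g₁) (j : Fin g₂) :
    vGrad ε δ (blockDiag τ₁ τ₂) (Sum.inl i) * vGrad ε δ (blockDiag τ₁ τ₂) (Sum.inr j) = 0 := by
  let L : (Fin g₁ ⊕ Fin g₂ → ℂ) →L[ℂ] (Fin g₁ ⊕ Fin g₂ → ℂ) :=
    ContinuousLinearMap.pi fun a => ThetaBlockDiag.flipSign a • ContinuousLinearMap.proj a
  refine fderiv_zero_mul_eq_zero_of_comp_eq_neg_one_pow L _
    (ThetaBlockDiag.theta_flipSign_mul (fun _ _ => rfl) (fun _ _ => rfl) ε δ) ?_ ?_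
  · ext a; cases a <;> simp [L, ThetaBlockDiag.flipSign, Pi.single_apply, apply_ite]
  · ext a; cases a <;> simp [L, ThetaBlockDiag.flipSign, Pi.single_apply]

/-- on a block diagonal period matrix, the gradient of any odd theta function
has vanishing products between the two blocks of coordinates; hence the Gauss images of all
smooth two-torsion points of the theta divisor lie on the quadrics `X_i X_j = 0`. -/
theorem statement19 {g₁ g₂ : ℕ} (h₁ : 1 ≤ g₁) (h₂ : 1 ≤ g₂)
    (τ₁ : Fin g₁ → Fin g₁ → ℂ) (hτ₁ : τ₁ ∈ SiegelUpper (Fin g₁))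
    (τ₂ : Fin g₂ → Fin g₂ → ℂ) (hτ₂ : τ₂ ∈ SiegelUpper (Fin g₂))
    (ε δ : Fin g₁ ⊕ Fin g₂ → ZMod 2) (hodd : (∑ a, ε a * δ a) = 1)
    (i : Fin g₁) (j : Fin g₂) :
    vGrad ε δ (blockDiag τ₁ τ₂) (Sum.inl i) * vGrad ε δ (blockDiag τ₁ τ₂) (Sum.inr j) = 0 :=
  statement19_general τ₁ τ₂ ε δ i j

end
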